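/- Let θ : ℝ → ℝ be bounded, measurable, and even (θ(−r) = θ(r) for all r), let f₀ : ℝ → ℝ be nonnegative and Lebesgue integrable, and let a ∈ ℝ. Then the function (x₁,x₂) ↦ θ(x₁−x₂) f₀(x₁) f₀(x₂) Ψ_a(x₁,x₂) is Lebesgue integrable on ℝ², and μ_θ[f₀; a] = 2 ∫₀^∞ θ(y) [ ∫_{a−y}^{a−y/2} f₀(z) f₀(z+y) dz − ∫_{a−y/2}^{a} f₀(z) f₀(z+y) dz ] dy. -/

import Mathlib

open MeasureTheory Set

/-- The measurement bracket `Ψ_a(x₁,x₂) = 2·𝟙[(x₁+x₂)/2 ≤ a] − 𝟙[x₁ ≤ a] − 𝟙[x₂ ≤ a]`. -/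
noncomputable def Psi (a x₁ x₂ : ℝ) : ℝ :=
  2 * (if (x₁ + x₂) / 2 ≤ a then (1 : ℝ) else 0)
    - (if x₁ ≤ a then (1 : ℝ) else 0) - (if x₂ ≤ a then (1 : ℝ) else 0)

/-- The initial measurement rate `μ_θ[f₀; a]`. -/
noncomputable def mu (θ f₀ : ℝ → ℝ) (a : ℝ) : ℝ :=
  ∫ p : ℝ × ℝ, θ (p.1 - p.2) * f₀ p.1 * f₀ p.2 * Psi a p.1 p.2

/-!
The shear `(x₁, x₂) = (z, z + y)` preserves Lebesgue measure on `ℝ²`, so `μ_θ[f₀; a]` is the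
integral over `y` of `G y = ∫ F (z, z + y) dz`, `F` being the integrand. As `θ` is even and `Ψ_a`
is symmetric, `F` is symmetric, hence `G` is even and `μ_θ[f₀; a] = 2 ∫_{y > 0} G y`. For `y > 0`,
`θ (z - (z + y)) = θ y` and `Ψ_a(z, z + y)` is the indicator of `(a - y, a - y/2]` minus that of
`(a - y/2, a]`.
-/

namespace MeasureTheory

variable {G E : Type*} [MeasurableSpace G] [AddGroup G] [MeasurableAdd₂ G] [MeasurableNeg G]
  [NormedAddCommGroup E]
  {μ ν : Measure G} [SFinite μ] [SFinite ν] [ν.IsAddLeftInvariant] {F : G × G → E}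

theorem Integrable.comp_shear (hF : Integrable F (μ.prod ν)) :
    Integrable (fun q : G × G => F (q.1, q.1 + q.2)) (μ.prod ν) :=
  ((measurePreserving_prod_add μ ν).integrable_comp_emb
    (MeasurableEquiv.shearAddRight G).measurableEmbedding).2 hF

theorem Integrable.ae_integrable_comp_add (hF : Integrable F (μ.prod ν)) :
    ∀ᵐ y ∂ν, Integrable (fun x => F (x, x + y)) μ :=
  hF.comp_shear.swap.prod_right_ae

theorem integral_prod_eq_integral_integral_add [NormedSpace ℝ E] (hF : Integrable F (μ.prod ν)) :
    ∫ p, F p ∂(μ.prod ν) = ∫ y, ∫ x, F (x, x + y) ∂μ ∂ν := by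
  rw [← (measurePreserving_prod_add μ ν).integral_comp
    (MeasurableEquiv.shearAddRight G).measurableEmbedding F]
  exact integral_prod_symm _ hF.comp_shear

end MeasureTheory

theorem integral_eq_two_mul_integral_Ioi_of_even {g : ℝ → ℝ} (hg : ∀ y, g (-y) = g y) :
    ∫ y, g y = 2 * ∫ y in Ioi 0, g y := by
  rw [← integral_comp_abs]
  congr 1 with y
  rcases abs_choice y with h | h <;> simp only [h, hg]

theorem integral_comp_add_neg_eq_of_symm {E : Type*} [NormedAddCommGroup E] [NormedSpace ℝ E]
    {F : ℝ × ℝ → E} (hF : ∀ u v, F (u, v) = F (v, u)) (y : ℝ) :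
    ∫ z, F (z, z + -y) = ∫ z, F (z, z + y) := by
  rw [← integral_add_right_eq_self _ y]
  simp only [add_neg_cancel_right]
  exact integral_congr_ae (Filter.Eventually.of_forall fun z => hF _ _)

theorem Psi_comm (a u v : ℝ) : Psi a u v = Psi a v u := by
  simp only [Psi, add_comm u v]; ring

theorem abs_Psi_le (a u v : ℝ) : |Psi a u v| ≤ 4 := by
  simp only [Psi]; split_ifs <;> norm_num

theorem measurable_Psi (a : ℝ) : Measurable (fun p : ℝ × ℝ => Psi a p.1 p.2) := by
  refine ((Measurable.const_mul ?_ 2).sub ?_).sub ?_ <;>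
    exact measurable_const.ite (measurableSet_le (by fun_prop) measurable_const) measurable_const

theorem Psi_add_eq_indicator_sub_indicator (a : ℝ) {y : ℝ} (hy : 0 < y) (z : ℝ) :
    Psi a z (z + y) =
      (Ioc (a - y) (a - y / 2)).indicator 1 z - (Ioc (a - y / 2) a).indicator 1 z := by
  simp only [Psi, indicator_apply, mem_Ioc, Pi.one_apply, ite_and]
  split_ifs <;> linarith

theorem integral_mul_Psi_add (a : ℝ) {g : ℝ → ℝ} (hg : Integrable g) {y : ℝ} (hy : 0 < y) :
    ∫ z, g z * Psi a z (z + y) =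
      (∫ z in (a - y)..(a - y / 2), g z) - ∫ z in (a - y / 2)..a, g z := by
  have mul_indicator_one (s : Set ℝ) (z : ℝ) : g z * s.indicator 1 z = s.indicator g z := by
    simp only [← indicator_mul_right, Pi.one_apply, mul_one]
  simp_rw [Psi_add_eq_indicator_sub_indicator a hy, mul_sub, mul_indicator_one]
  rw [integral_sub (hg.indicator measurableSet_Ioc) (hg.indicator measurableSet_Ioc),
    integral_indicator measurableSet_Ioc, integral_indicator measurableSet_Ioc,
    intervalIntegral.integral_of_le (by linarith), intervalIntegral.integral_of_le (by linarith)]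

theorem integrable_mu_integrand {θ f : ℝ → ℝ} (a : ℝ) (hθm : Measurable θ)
    (hθb : ∃ K, ∀ r, |θ r| ≤ K) (hf : Integrable f) :
    Integrable (fun p : ℝ × ℝ => θ (p.1 - p.2) * f p.1 * f p.2 * Psi a p.1 p.2) := by
  obtain ⟨K, hK⟩ := hθb
  have hbdd : ∀ p : ℝ × ℝ, ‖θ (p.1 - p.2) * Psi a p.1 p.2‖ ≤ K * 4 := fun p => by
    rw [norm_mul, Real.norm_eq_abs, Real.norm_eq_abs]
    exact mul_le_mul (hK _) (abs_Psi_le ..) (abs_nonneg _) ((abs_nonneg _).trans (hK 0))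
  rw [Measure.volume_eq_prod]
  have hmeas : Measurable fun p : ℝ × ℝ => θ (p.1 - p.2) * Psi a p.1 p.2 :=
    (hθm.comp (by fun_prop)).mul (measurable_Psi a)
  refine ((hf.mul_prod hf).bdd_mul hmeas.aestronglyMeasurable (.of_forall hbdd)).congr
    (.of_forall fun p => ?_)
  ring

theorem stmt1_general (θ f₀ : ℝ → ℝ) (a : ℝ)
    (hθm : Measurable θ) (hθb : ∃ K, ∀ r, |θ r| ≤ K) (hθe : ∀ r, θ (-r) = θ r)
    (hf₀i : Integrable f₀) :
    Integrable (fun p : ℝ × ℝ => θ (p.1 - p.2) * f₀ p.1 * f₀ p.2 * Psi a p.1 p.2) ∧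
      mu θ f₀ a
        = 2 * ∫ y in Set.Ioi (0:ℝ),
            θ y * ((∫ z in (a - y)..(a - y / 2), f₀ z * f₀ (z + y))
              - ∫ z in (a - y / 2)..a, f₀ z * f₀ (z + y)) := by
  set F : ℝ × ℝ → ℝ := fun p => θ (p.1 - p.2) * f₀ p.1 * f₀ p.2 * Psi a p.1 p.2
  have hF : Integrable F := integrable_mu_integrand a hθm hθb hf₀i
  have hF_symm (u v : ℝ) : F (u, v) = F (v, u) := by
    simp only [F, Psi_comm a u, ← hθe (u - v), neg_sub]
    ring
  have hF_shear (y z : ℝ) : F (z, z + y) = θ y * (f₀ z * f₀ (z + y) * Psi a z (z + y)) := by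
    simp only [F, show z - (z + y) = -y by ring, hθe]
    ring
  refine ⟨hF, ?_⟩
  rw [Measure.volume_eq_prod] at hF
  rw [mu, Measure.volume_eq_prod, integral_prod_eq_integral_integral_add hF,
    integral_eq_two_mul_integral_Ioi_of_even (integral_comp_add_neg_eq_of_symm hF_symm)]
  congr 1
  refine setIntegral_congr_ae measurableSet_Ioi ?_
  filter_upwards [(hf₀i.mul_prod hf₀i).ae_integrable_comp_add] with y hy hy0
  simp only [hF_shear, integral_const_mul, integral_mul_Psi_add a hy hy0]

theorem stmt1 (θ f₀ : ℝ → ℝ) (a : ℝ)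
    (hθm : Measurable θ) (hθb : ∃ K, ∀ r, |θ r| ≤ K) (hθe : ∀ r, θ (-r) = θ r)
    (hf₀ : ∀ x, 0 ≤ f₀ x) (hf₀i : Integrable f₀) :
    Integrable (fun p : ℝ × ℝ => θ (p.1 - p.2) * f₀ p.1 * f₀ p.2 * Psi a p.1 p.2) ∧
      mu θ f₀ a
        = 2 * ∫ y in Set.Ioi (0:ℝ),
            θ y * ((∫ z in (a - y)..(a - y / 2), f₀ z * f₀ (z + y))
              - ∫ z in (a - y / 2)..a, f₀ z * f₀ (z + y)) :=
  stmt1_general θ f₀ a hθm hθb hθe hf₀i
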